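/- Let Φ ∈ M_L(ℂ[[w]]) be an L×L matrix of formal power series such that the constant-term matrix Φ(0) is invertible and lower triangular, and let f_i := Φ_{i,0} (0 ≤ i ≤ L−1) be the entries of the first column of Φ (so f_0(0) ≠ 0). Suppose the polynomials Q_j^{(i)} form a solution of the Hermite–Padé approximation problem for (f_0, …, f_{L−1}) satisfying det M_Q(w) = w^{nL}. Then there exists Φ̂ ∈ M_L(ℂ[[w]]) such that M_Q(w)·Φ(w) = Φ̂(w)·diag(w^{nL}, 1, …, 1), the constant-term matrix Φ̂(0) is lower triangular, and det Φ̂ = det Φ as formal power series (in particular Φ̂(0) is invertible). -/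

import Mathlib

noncomputable section

/-- `g = O(w^N)`: the coefficients of `w^0, …, w^{N-1}` in `g` vanish. -/
def bigOh (g : PowerSeries ℂ) (N : ℕ) : Prop := ∀ k < N, PowerSeries.coeff k g = 0

/-- The entries of the row vector Q̃^{(i)} = (Q_0^{(i)}, …, Q_i^{(i)}, wQ_{i+1}^{(i)}, …, wQ_{L-1}^{(i)}). -/
def Qtil {L : ℕ} (Q : Fin L → Fin L → Polynomial ℂ) (i j : Fin L) : Polynomial ℂ :=
  if (j : ℕ) ≤ (i : ℕ) then Q i j else Polynomial.X * Q i j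

/-- A solution of the Hermite–Padé approximation problem. -/
def IsHPSol {L : ℕ} (n : ℕ) (f : Fin L → PowerSeries ℂ)
    (Q : Fin L → Fin L → Polynomial ℂ) : Prop :=
  (∀ i j, (Q i j).degree ≤ ((n - 1 + if i = j then 1 else 0 : ℕ) : WithBot ℕ)) ∧
  ∀ i, bigOh (∑ j, f j * ((Qtil Q i j : Polynomial ℂ) : PowerSeries ℂ)) (n * L)

/-- The entries of the column vector P̃^{(j)} = ᵀ(wP_0^{(j)}, …, wP_{j-1}^{(j)}, P_j^{(j)}, …, P_{L-1}^{(j)}). -/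
def Ptil {L : ℕ} (P : Fin L → Fin L → Polynomial ℂ) (j i : Fin L) : Polynomial ℂ :=
  if (i : ℕ) < (j : ℕ) then Polynomial.X * P j i else P j i

/-- A solution of the simultaneous Padé approximation problem.
Here `P j i` denotes the polynomial `P_i^{(j)}`. -/
def IsSPSol {L : ℕ} [NeZero L] (n : ℕ) (f : Fin L → PowerSeries ℂ)
    (P : Fin L → Fin L → Polynomial ℂ) : Prop :=
  (∀ j i, (P j i).degree ≤ ((n * (L - 1) - 1 + if i = j then 1 else 0 : ℕ) : WithBot ℕ)) ∧
  (∀ i : Fin L, 1 ≤ (i : ℕ) →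
    bigOh (f 0 * ((P 0 i : Polynomial ℂ) : PowerSeries ℂ)
      - f i * ((P 0 0 : Polynomial ℂ) : PowerSeries ℂ)) (n * L)) ∧
  (∀ j i : Fin L, 1 ≤ (j : ℕ) → 1 ≤ (i : ℕ) → (i : ℕ) < (j : ℕ) →
    bigOh (f 0 * ((P j i : Polynomial ℂ) : PowerSeries ℂ)
      - f i * ((P j 0 : Polynomial ℂ) : PowerSeries ℂ)) (n * L)) ∧
  (∀ j i : Fin L, 1 ≤ (j : ℕ) → (j : ℕ) ≤ (i : ℕ) →
    bigOh (f 0 * ((P j i : Polynomial ℂ) : PowerSeries ℂ)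
      - f i * ((Polynomial.X * P j 0 : Polynomial ℂ) : PowerSeries ℂ)) (n * L))

/-! The Hermite–Padé conditions say exactly that the first column of `M_Q Φ` is divisible by
`w^{nL}`; dividing it out gives `Φ̂`. The remaining columns of `Φ̂` are those of `M_Q Φ`, whose
constant term `M_Q(0) Φ(0)` is a product of lower triangular matrices (the entries `w Q_j^{(i)}`,
`j > i`, vanish at `0`). Taking determinants, `w^{nL} det Φ = det Φ̂ · w^{nL}`, and `w^{nL}`
cancels in the domain `ℂ[[w]]`. -/

open PowerSeries Matrix

theorem bigOh_iff_X_pow_dvd {g : PowerSeries ℂ} {N : ℕ} : bigOh g N ↔ X ^ N ∣ g :=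
  X_pow_dvd_iff.symm

theorem det_of_coe {ι R : Type*} [Fintype ι] [DecidableEq ι] [CommRing R]
    (P : ι → ι → Polynomial R) :
    (of fun i j => (P i j : PowerSeries R)).det = ((of P).det : PowerSeries R) :=
  (RingHom.map_det (Polynomial.coeToPowerSeries.ringHom (R := R)) (of P)).symm

theorem det_diagonal_ite_one {ι R : Type*} [Fintype ι] [DecidableEq ι] [CommRing R]
    (j₀ : ι) (d : R) : (diagonal fun j => if j = j₀ then d else 1).det = d := by
  rw [det_diagonal, Finset.prod_ite_eq' Finset.univ j₀ (fun _ => d)]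
  simp

theorem exists_eq_mul_diagonal_of_dvd_col {m ι R : Type*} [Fintype ι] [DecidableEq ι]
    [CommSemiring R] (A : Matrix m ι R) (j₀ : ι) (d : R) (hdvd : ∀ i, d ∣ A i j₀) :
    ∃ B : Matrix m ι R, A = B * diagonal (fun j => if j = j₀ then d else 1) ∧
      ∀ i j, j ≠ j₀ → B i j = A i j := by
  choose c hc using hdvd
  refine ⟨of fun i j => if j = j₀ then c i else A i j, ?_, fun i j hj => if_neg hj⟩
  ext i j
  rw [mul_diagonal]
  by_cases hj : j = j₀
  · subst hj
    simp [hc i, mul_comm]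
  · simp [hj]

theorem constantCoeff_mul_apply_eq_zero {ι R : Type*} [Fintype ι] [LinearOrder ι] [CommRing R]
    {A B : Matrix ι ι (PowerSeries R)}
    (hA : ∀ i k, i < k → constantCoeff (A i k) = 0)
    (hB : ∀ k j, k < j → constantCoeff (B k j) = 0) {i j : ι} (hij : i < j) :
    constantCoeff ((A * B) i j) = 0 := by
  rw [RingHom.map_matrix_mul]
  exact BlockTriangular.mul (b := OrderDual.toDual) hA hB hij

theorem constantCoeff_Qtil_eq_zero {L : ℕ} (Q : Fin L → Fin L → Polynomial ℂ) {i j : Fin L}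
    (hij : i < j) : constantCoeff (Qtil Q i j : PowerSeries ℂ) = 0 := by
  rw [← coeff_zero_eq_constantCoeff_apply, Polynomial.coeff_coe, Qtil,
    if_neg (not_le.2 (Fin.lt_def.1 hij))]
  simp [Polynomial.mul_coeff_zero]

theorem IsHPSol.X_pow_dvd_mul_apply_zero {L n : ℕ} [NeZero L]
    {Φ : Matrix (Fin L) (Fin L) (PowerSeries ℂ)} {Q : Fin L → Fin L → Polynomial ℂ}
    (hQ : IsHPSol n (fun i => Φ i 0) Q) (i : Fin L) :
    X ^ (n * L) ∣ ((of fun i j => (Qtil Q i j : PowerSeries ℂ)) * Φ) i 0 := by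
  rw [← bigOh_iff_X_pow_dvd]
  simpa [mul_apply, mul_comm] using hQ.2 i

theorem schlesinger_powerseries_general (L n : ℕ) [NeZero L]
    (Φ : Matrix (Fin L) (Fin L) (PowerSeries ℂ))
    (hlow : ∀ i j : Fin L, (i : ℕ) < (j : ℕ) → PowerSeries.constantCoeff (Φ i j) = 0)
    (Q : Fin L → Fin L → Polynomial ℂ)
    (hQ : IsHPSol n (fun i => Φ i 0) Q)
    (hdet : (Matrix.of fun i j => Qtil Q i j).det = Polynomial.X ^ (n * L)) :
    ∃ Φh : Matrix (Fin L) (Fin L) (PowerSeries ℂ),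
      (Matrix.of fun i j => ((Qtil Q i j : Polynomial ℂ) : PowerSeries ℂ)) * Φ =
        Φh * Matrix.diagonal (fun j : Fin L =>
          if j = 0 then (PowerSeries.X : PowerSeries ℂ) ^ (n * L) else 1) ∧
      (∀ i j : Fin L, (i : ℕ) < (j : ℕ) → PowerSeries.constantCoeff (Φh i j) = 0) ∧
      Φh.det = Φ.det := by
  obtain ⟨Φh, hfac, hcol⟩ :=
    exists_eq_mul_diagonal_of_dvd_col _ 0 _ (IsHPSol.X_pow_dvd_mul_apply_zero hQ)
  refine ⟨Φh, hfac, fun i j hij => ?_, ?_⟩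
  · rw [hcol i j ((Fin.zero_le i).trans_lt hij).ne']
    exact constantCoeff_mul_apply_eq_zero (fun _ _ => constantCoeff_Qtil_eq_zero Q) hlow hij
  · have hdet' := congrArg det hfac
    rw [det_mul, det_mul, det_of_coe, hdet, det_diagonal_ite_one, Polynomial.coe_pow,
      Polynomial.coe_X, mul_comm] at hdet'
    exact (mul_right_cancel₀ (pow_ne_zero (n * L) X_ne_zero) hdet').symm

/-- The power-series content of the Schlesinger transformation `Y ↦ RY`
shifting the exponents at `z = ∞` by `(n(L-1), -n, …, -n)`. -/
theorem schlesinger_powerseries (L n : ℕ) (hL : 2 ≤ L) [NeZero L] (hn : 0 < n)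
    (Φ : Matrix (Fin L) (Fin L) (PowerSeries ℂ))
    (hinv : IsUnit (Matrix.det (Matrix.of fun i j => PowerSeries.constantCoeff (Φ i j))))
    (hlow : ∀ i j : Fin L, (i : ℕ) < (j : ℕ) → PowerSeries.constantCoeff (Φ i j) = 0)
    (Q : Fin L → Fin L → Polynomial ℂ)
    (hQ : IsHPSol n (fun i => Φ i 0) Q)
    (hdet : (Matrix.of fun i j => Qtil Q i j).det = Polynomial.X ^ (n * L)) :
    ∃ Φh : Matrix (Fin L) (Fin L) (PowerSeries ℂ),
      (Matrix.of fun i j => ((Qtil Q i j : Polynomial ℂ) : PowerSeries ℂ)) * Φ =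
        Φh * Matrix.diagonal (fun j : Fin L =>
          if j = 0 then (PowerSeries.X : PowerSeries ℂ) ^ (n * L) else 1) ∧
      (∀ i j : Fin L, (i : ℕ) < (j : ℕ) → PowerSeries.constantCoeff (Φh i j) = 0) ∧
      Φh.det = Φ.det :=
  schlesinger_powerseries_general L n Φ hlow Q hQ hdet
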